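/- Given a SHACL document M, a graph G, an assignment σ and a node n, the following hold for every SHACL constraint d occurring in M: (i) the three-valued evaluation of d at n under G,σ is True iff the Boolean evaluation of γ(d) at n under G,σ^γ is True; (ii) the three-valued evaluation of d at n under G,σ is False iff the Boolean evaluation of γ(¬d) at n under G,σ^γ is True; (iii) the three-valued evaluation of d at n under G,σ is Undefined iff both the evaluations of γ(d) and of γ(¬d) at n under G,σ^γ are False. -/

import Mathlib

/-!
STATEMENT 3.  The γ transformation (replacing positive shape-reference atoms
`s(x)` by `s⁺(x) ∧ ¬s⁻(x)` and negated ones `¬s(x)` by `¬s⁺(x) ∧ s⁻(x)`)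
together with the total assignment `σ^γ` turns three-valued evaluation of a
constraint into Boolean evaluation of `γ(d)` and `γ(¬d)`.
-/

namespace SHACL

/-- RDF nodes: a single infinite domain of RDF terms. -/
abbrev Node := ℕ

/-- Shape names. -/
abbrev SName := ℕ

/-- An RDF graph: a set of (subject, predicate, object) triples. -/
abbrev Graph := Set (Node × Node × Node)

/-- Kleene's three truth values. -/
inductive K3 | t | f | u
deriving DecidableEq

/-- An assignment maps each node and shape name to `some true` (the shape
literal `s` is assigned), `some false` (the literal `¬s` is assigned) or
`none` (neither); this representation guarantees that `s` and `¬s` are never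
assigned simultaneously. -/
abbrev Assignment := Node → SName → Option Bool

/-- SHACL constraints (abstract core syntax): the empty constraint, shape
references, equality with a constant, a graph atom (existence of a given
triple), existential quantification along a property, negation and
conjunction. -/
inductive Constraint
  | top
  | ref (s : SName)
  | eqc (c : Node)
  | hasTriple (p o : Node)
  | exPath (p : Node) (d : Constraint)
  | not (d : Constraint)
  | and (d₁ d₂ : Constraint)

open Classical in
/-- Three-valued (Kleene) evaluation `⟦d⟧^{G,σ}(n)` of a constraint at a node:
a shape reference `s(x)` is `True` if `s ∈ σ(x)`, `False` if `¬s ∈ σ(x)` and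
`Undefined` otherwise. -/
noncomputable def eval (G : Graph) (σ : Assignment) : Constraint → Node → K3
  | .top, _ => .t
  | .ref s, n =>
      match σ n s with
      | some true => .t
      | some false => .f
      | none => .u
  | .eqc c, n => if n = c then .t else .f
  | .hasTriple p o, n => if (n, p, o) ∈ G then .t else .f
  | .exPath p d, n =>
      if ∃ m, (n, p, m) ∈ G ∧ eval G σ d m = .t then .t
      else if ∀ m, (n, p, m) ∈ G → eval G σ d m = .f then .f
      else .u
  | .not d, n =>
      match eval G σ d n with
      | .t => .f
      | .f => .t
      | .u => .u
  | .and d₁ d₂, n =>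
      match eval G σ d₁ n, eval G σ d₂ n with
      | .f, _ => .f
      | _, .f => .f
      | .t, .t => .t
      | _, _ => .u

/-- A SHACL shape: a name, a target definition (a unary query over graphs)
and a constraint. -/
structure Shape where
  name : SName
  target : Graph → Set Node
  constraint : Constraint

/-- A SHACL document: a set of shapes. -/
abbrev Document := Set Shape

/-- `M̃`: the document `M` with every target definition replaced by the empty
target. -/
def minusTargets (M : Document) : Document :=
  (fun sh => { name := sh.name, target := fun _ => (∅ : Set Node),
               constraint := sh.constraint : Shape }) '' M

/-- Faithfulness of an assignment `σ` w.r.t. a graph `G` and a document `M`: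
(1) for every shape `⟨s,t,d⟩` of `M` and node `n`, `s ∈ σ(n)` iff
    `⟦d⟧^{G,σ}(n) = True` and `¬s ∈ σ(n)` iff `⟦d⟧^{G,σ}(n) = False`;
(2) every node targeted by `t` in `G` satisfies `s ∈ σ(n)`. -/
def Faithful (G : Graph) (σ : Assignment) (M : Document) : Prop :=
  (∀ sh ∈ M, ∀ n : Node,
      (σ n sh.name = some true ↔ eval G σ sh.constraint n = .t) ∧
      (σ n sh.name = some false ↔ eval G σ sh.constraint n = .f)) ∧
  (∀ sh ∈ M, ∀ n ∈ sh.target G, σ n sh.name = some true)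


/-- The fresh shape name `s⁺` associated with `s`. -/
def plus (s : SName) : SName := 2 * s

/-- The fresh shape name `s⁻` associated with `s`. -/
def minus (s : SName) : SName := 2 * s + 1

/-- The total assignment `σ^γ`:
`σ^γ(n) = {s⁺, ¬s⁻ | s ∈ σ(n)} ∪ {¬s⁺, s⁻ | ¬s ∈ σ(n)} ∪
          {¬s⁺, ¬s⁻ | s, ¬s ∉ σ(n)}`. -/
def gammaAssign (σ : Assignment) : Assignment := fun n s =>
  if s % 2 = 0 then some (decide (σ n (s / 2) = some true))
  else some (decide (σ n (s / 2) = some false))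

mutual
  /-- `γ(d)`: the translation of a constraint `d`; every non-negated
  shape-reference atom `s(x)` becomes `s⁺(x) ∧ ¬s⁻(x)` and every negated
  shape-reference atom `¬s(x)` becomes `¬s⁺(x) ∧ s⁻(x)`. -/
  def gammaPos : Constraint → Constraint
    | .ref s => .and (.ref (plus s)) (.not (.ref (minus s)))
    | .not d => gammaNeg d
    | .and d₁ d₂ => .and (gammaPos d₁) (gammaPos d₂)
    | .exPath p d => .exPath p (gammaPos d)
    | .top => .top
    | .eqc c => .eqc c
    | .hasTriple p o => .hasTriple p o

  /-- `γ(¬d)`: the translation of the negated form of a constraint `d`. -/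
  def gammaNeg : Constraint → Constraint
    | .ref s => .and (.not (.ref (plus s))) (.ref (minus s))
    | .not d => gammaPos d
    | .and d₁ d₂ => .not (.and (.not (gammaNeg d₁)) (.not (gammaNeg d₂)))
    | .exPath p d => .not (.exPath p (.not (gammaNeg d)))
    | .top => .not .top
    | .eqc c => .not (.eqc c)
    | .hasTriple p o => .not (.hasTriple p o)
end

/-!
Under `σ^γ` every shape reference is two-valued, and `s⁺`, `s⁻` record exactly whether `s`
resp. `¬s` is assigned by `σ`. Hence, by induction on `d`, `γ(d)` evaluates to the Boolean
value of "`d` is true" and `γ(¬d)` to that of "`d` is false" (the Kleene connectives restricted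
to `{t, f}` are the Boolean ones, and the existential never reaches its undefined branch).
The three claims then follow by cases on the value of `d`.
-/

namespace K3

open Classical in
noncomputable def ofProp (p : Prop) : K3 := if p then .t else .f

@[simp] lemma ofProp_eq_t_iff {p : Prop} : ofProp p = .t ↔ p := by
  unfold ofProp; split_ifs <;> simp_all

@[simp] lemma ofProp_eq_f_iff {p : Prop} : ofProp p = .f ↔ ¬p := by
  unfold ofProp; split_ifs <;> simp_all

lemma eq_ofProp_of_iff {x : K3} {p : Prop} (ht : x = .t ↔ p) (hf : x = .f ↔ ¬p) :
    x = ofProp p := by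
  by_cases hp : p
  · rw [ht.2 hp, eq_comm, ofProp_eq_t_iff]; exact hp
  · rw [hf.2 hp, eq_comm, ofProp_eq_f_iff]; exact hp

end K3

open K3

section EvalLemmas

variable {G : Graph} {σ : Assignment} {n : Node}

lemma eval_ref_eq_t_iff {s : SName} : eval G σ (.ref s) n = .t ↔ σ n s = some true := by
  simp only [eval]; split <;> simp_all

lemma eval_ref_eq_f_iff {s : SName} : eval G σ (.ref s) n = .f ↔ σ n s = some false := by
  simp only [eval]; split <;> simp_all

lemma eval_not_eq_t_iff {d : Constraint} : eval G σ (.not d) n = .t ↔ eval G σ d n = .f := by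
  simp only [eval]; split <;> simp_all

lemma eval_not_eq_f_iff {d : Constraint} : eval G σ (.not d) n = .f ↔ eval G σ d n = .t := by
  simp only [eval]; split <;> simp_all

lemma eval_and_eq_t_iff {d₁ d₂ : Constraint} :
    eval G σ (.and d₁ d₂) n = .t ↔ eval G σ d₁ n = .t ∧ eval G σ d₂ n = .t := by
  simp only [eval]; split <;> simp_all

lemma eval_and_eq_f_iff {d₁ d₂ : Constraint} :
    eval G σ (.and d₁ d₂) n = .f ↔ eval G σ d₁ n = .f ∨ eval G σ d₂ n = .f := by
  simp only [eval]; split <;> simp_all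

lemma eval_exPath_eq_t_iff {p : Node} {d : Constraint} :
    eval G σ (.exPath p d) n = .t ↔ ∃ m, (n, p, m) ∈ G ∧ eval G σ d m = .t := by
  simp only [eval]; split_ifs <;> simp_all

lemma eval_exPath_eq_f_iff {p : Node} {d : Constraint} :
    eval G σ (.exPath p d) n = .f ↔ ∀ m, (n, p, m) ∈ G → eval G σ d m = .f := by
  simp only [eval]
  split_ifs with hex hall
  · obtain ⟨m, hm, hdm⟩ := hex
    simpa using ⟨m, hm, by simp [hdm]⟩
  · simpa using hall
  · simpa using hall

lemma eval_not_ofProp {d : Constraint} {P : Prop} (h : eval G σ d n = ofProp P) :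
    eval G σ (.not d) n = ofProp ¬P :=
  eq_ofProp_of_iff (by simp [eval_not_eq_t_iff, h]) (by simp [eval_not_eq_f_iff, h])

lemma eval_and_ofProp {d₁ d₂ : Constraint} {P Q : Prop}
    (h₁ : eval G σ d₁ n = ofProp P) (h₂ : eval G σ d₂ n = ofProp Q) :
    eval G σ (.and d₁ d₂) n = ofProp (P ∧ Q) :=
  eq_ofProp_of_iff (by simp [eval_and_eq_t_iff, h₁, h₂])
    (by rw [eval_and_eq_f_iff, h₁, h₂, not_and_or]; simp)

lemma eval_exPath_ofProp {p : Node} {d : Constraint} {P : Node → Prop}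
    (h : ∀ m, eval G σ d m = ofProp (P m)) :
    eval G σ (.exPath p d) n = ofProp (∃ m, (n, p, m) ∈ G ∧ P m) :=
  eq_ofProp_of_iff (by simp [eval_exPath_eq_t_iff, h]) (by simp [eval_exPath_eq_f_iff, h])

end EvalLemmas

lemma gammaAssign_plus (σ : Assignment) (n : Node) (s : SName) :
    gammaAssign σ n (plus s) = some (decide (σ n s = some true)) := by
  simp [gammaAssign, plus]

lemma gammaAssign_minus (σ : Assignment) (n : Node) (s : SName) :
    gammaAssign σ n (minus s) = some (decide (σ n s = some false)) := by
  simp [gammaAssign, minus, Nat.add_mod, Nat.add_div]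

section Gamma

variable (G : Graph) (σ : Assignment)

lemma eval_gammaAssign_ref_plus (n : Node) (s : SName) :
    eval G (gammaAssign σ) (.ref (plus s)) n = ofProp (σ n s = some true) :=
  eq_ofProp_of_iff (by simp [eval_ref_eq_t_iff, gammaAssign_plus])
    (by simp [eval_ref_eq_f_iff, gammaAssign_plus])

lemma eval_gammaAssign_ref_minus (n : Node) (s : SName) :
    eval G (gammaAssign σ) (.ref (minus s)) n = ofProp (σ n s = some false) :=
  eq_ofProp_of_iff (by simp [eval_ref_eq_t_iff, gammaAssign_minus])
    (by simp [eval_ref_eq_f_iff, gammaAssign_minus])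

theorem eval_gammaPos_gammaNeg (d : Constraint) : ∀ n : Node,
    eval G (gammaAssign σ) (gammaPos d) n = ofProp (eval G σ d n = .t) ∧
    eval G (gammaAssign σ) (gammaNeg d) n = ofProp (eval G σ d n = .f) := by
  induction d with
  | top => intro n; simp [eval, gammaPos, gammaNeg, ofProp]
  | eqc c => intro n; by_cases h : n = c <;> simp [eval, gammaPos, gammaNeg, ofProp, h]
  | hasTriple p o =>
    intro n; by_cases h : (n, p, o) ∈ G <;> simp [eval, gammaPos, gammaNeg, ofProp, h]
  | ref s =>
    intro n
    have hplus := eval_gammaAssign_ref_plus G σ n s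
    have hminus := eval_gammaAssign_ref_minus G σ n s
    refine ⟨?_, ?_⟩
    · rw [gammaPos, eval_and_ofProp hplus (eval_not_ofProp hminus), eval_ref_eq_t_iff,
        and_iff_left_of_imp fun h => by simp [h]]
    · rw [gammaNeg, eval_and_ofProp (eval_not_ofProp hplus) hminus, eval_ref_eq_f_iff,
        and_iff_right_of_imp fun h => by simp [h]]
  | not d ih =>
    intro n
    rw [gammaPos, gammaNeg, eval_not_eq_t_iff, eval_not_eq_f_iff]
    exact (ih n).symm
  | and d₁ d₂ ih₁ ih₂ =>
    intro n
    refine ⟨?_, ?_⟩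
    · rw [gammaPos, eval_and_ofProp (ih₁ n).1 (ih₂ n).1, eval_and_eq_t_iff]
    · rw [gammaNeg, eval_not_ofProp (eval_and_ofProp (eval_not_ofProp (ih₁ n).2)
        (eval_not_ofProp (ih₂ n).2)), eval_and_eq_f_iff]
      simp only [not_and_or, not_not]
  | exPath p d ih =>
    intro n
    refine ⟨?_, ?_⟩
    · rw [gammaPos, eval_exPath_ofProp (fun m => (ih m).1), eval_exPath_eq_t_iff]
    · rw [gammaNeg, eval_not_ofProp (eval_exPath_ofProp (fun m => eval_not_ofProp (ih m).2)),
        eval_exPath_eq_f_iff]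
      simp only [not_exists, not_and, not_not]

end Gamma

/-- Lemma on the γ transformation: given a SHACL document
`M`, a graph `G`, an assignment `σ` and a node `n`, for every constraint `d`
occurring in `M`:
(i)   `⟦d⟧^{G,σ}(n) = True`  iff `⟦γ(d)⟧^{G,σ^γ}(n) = True`;
(ii)  `⟦d⟧^{G,σ}(n) = False` iff `⟦γ(¬d)⟧^{G,σ^γ}(n) = True`;
(iii) `⟦d⟧^{G,σ}(n) = Undefined` iff both `⟦γ(d)⟧^{G,σ^γ}(n)` and
      `⟦γ(¬d)⟧^{G,σ^γ}(n)` are `False`. -/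
theorem gamma_transformation_properties
    (M : Document) (G : Graph) (σ : Assignment) (n : Node)
    (d : Constraint) (hd : ∃ sh ∈ M, sh.constraint = d) :
    (eval G σ d n = K3.t ↔ eval G (gammaAssign σ) (gammaPos d) n = K3.t) ∧
    (eval G σ d n = K3.f ↔ eval G (gammaAssign σ) (gammaNeg d) n = K3.t) ∧
    (eval G σ d n = K3.u ↔
      (eval G (gammaAssign σ) (gammaPos d) n = K3.f ∧
       eval G (gammaAssign σ) (gammaNeg d) n = K3.f)) := by
  obtain ⟨hpos, hneg⟩ := eval_gammaPos_gammaNeg G σ d n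
  rw [hpos, hneg]
  cases eval G σ d n <;> simp

end SHACL
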